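/- arXiv:2508.02813 — 8 statements merged into one kernel-verified Lean document; each statement's English description precedes it below -/
import Mathlib

section
/- Let F be a field, A ∈ F^{m×n}, and i ≤ min(m,n). If e_n(i) lies in the row space of A⟨i;⟩ (i.e., i is firmly frozen in A), then there exists an index j ∈ supp(A⟨i;⟩(·,i)) (that is, j ≠ i with A(j,i) ≠ 0) such that the j-th standard unit column vector e_m(j)^T does not lie in the column space of A⟨i;i⟩ (equivalently, j is not frozen in A⟨i;i⟩^T). -/
/-!
Write `e_i = c ᵀ A⟨i;⟩` as a combination of the rows of `A⟨i;⟩`. Reading this off in column `i`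
gives `∑ⱼ c j * A⟨i;⟩ j i = 1`, so some `j` has `c j ≠ 0` and `A⟨i;⟩ j i ≠ 0`; reading it off in
every other column gives `c ᵀ A⟨i;i⟩ = 0`. Hence `c` is orthogonal to the column space of `A⟨i;i⟩`,
which therefore cannot contain `e_j`, as `c ⬝ᵥ e_j = c j ≠ 0`.
-/

open Matrix

namespace Matrix

variable {R : Type*} [CommSemiring R] {m n : Type*} [Fintype m]

theorem mem_span_range_iff_exists_vecMul (A : Matrix m n R) (x : n → R) :
    x ∈ Submodule.span R (Set.range A) ↔ ∃ c : m → R, c ᵥ* A = x := by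
  simp only [vecMul_eq_sum]
  exact Submodule.mem_span_range_iff_exists_fun R

theorem vecMul_updateCol_zero_of_vecMul_eq_single [DecidableEq n] {A : Matrix m n R}
    {c : m → R} {k : n} (hc : c ᵥ* A = Pi.single k 1) : c ᵥ* A.updateCol k 0 = 0 := by
  rw [vecMul_updateCol, hc, dotProduct_zero, Pi.single, Function.update_idem, ← Pi.single,
    Pi.single_zero]

theorem dotProduct_eq_zero_of_mem_span_cols [Fintype n] {C : Matrix m n R} {c : m → R}
    (hc : c ᵥ* C = 0) {v : m → R} (hv : v ∈ Submodule.span R (Set.range Cᵀ)) : c ⬝ᵥ v = 0 := by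
  obtain ⟨d, rfl⟩ := (mem_span_range_iff_exists_vecMul Cᵀ v).1 hv
  rw [vecMul_transpose, dotProduct_mulVec, hc, zero_dotProduct]

end Matrix

/-- If `i` is firmly frozen in `A`, then some `j` in the support of the `i`-th column of
`A⟨i;⟩` is such that the `j`-th unit column vector is not in the column space of `A⟨i;i⟩`
(i.e. `j` is not frozen in `A⟨i;i⟩ᵀ`). -/
theorem stmt_7 {F : Type*} [Field F] {m n : ℕ} (A : Matrix (Fin m) (Fin n) F)
    (i : ℕ) (him : i < m) (hin : i < n)
    (h : Pi.single (⟨i, hin⟩ : Fin n) 1 ∈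
      Submodule.span F (Set.range (A.updateRow ⟨i, him⟩ 0))) :
    ∃ j : Fin m, (A.updateRow ⟨i, him⟩ 0) j ⟨i, hin⟩ ≠ 0 ∧
      Pi.single j 1 ∉
        Submodule.span F (Set.range ((A.updateRow ⟨i, him⟩ 0).updateCol ⟨i, hin⟩ 0)ᵀ) := by
  set B := A.updateRow ⟨i, him⟩ 0
  obtain ⟨c, hc⟩ := (mem_span_range_iff_exists_vecMul B _).1 h
  have hc_i : ∑ r, c r * B r ⟨i, hin⟩ = 1 := by
    simpa [vecMul, dotProduct] using congrFun hc ⟨i, hin⟩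
  obtain ⟨j, -, hj⟩ := Finset.exists_ne_zero_of_sum_ne_zero (hc_i ▸ one_ne_zero)
  refine ⟨j, right_ne_zero_of_mul hj, fun hmem => left_ne_zero_of_mul hj ?_⟩
  simpa using
    dotProduct_eq_zero_of_mem_span_cols (vecMul_updateCol_zero_of_vecMul_eq_single hc) hmem
end

section
/- Let F be a field, A ∈ F^{m×n}, v ≤ min(m,n), and i ∈ [n] with i ≠ v. If i is frozen in A⟨v;v⟩ (the matrix A with row v and column v zeroed) but i is not frozen in A, then {i, v} is a proper relation of A. -/
/-- `i` is frozen in `A` if the `i`-th standard unit row vector lies in the row space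
of `A`. -/
def Matrix.IsFrozen {F : Type*} [Field F] {m n : ℕ} (A : Matrix (Fin m) (Fin n) F)
    (i : Fin n) : Prop :=
  Pi.single i 1 ∈ Submodule.span F (Set.range A)

/-- A nonempty `I ⊆ [n]` is a relation of `A` if some row combination `y ᵥ* A` has
nonempty support contained in `I`. -/
def Matrix.IsRelation {F : Type*} [Field F] {m n : ℕ} (A : Matrix (Fin m) (Fin n) F)
    (I : Set (Fin n)) : Prop :=
  ∃ y : Fin m → F, (Function.support (Matrix.vecMul y A)).Nonempty ∧
    Function.support (Matrix.vecMul y A) ⊆ I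

/-- A relation `I` of `A` is a proper relation if moreover `I` minus the set of frozen
indices of `A` is again a relation of `A`. -/
def Matrix.IsProperRelation {F : Type*} [Field F] {m n : ℕ} (A : Matrix (Fin m) (Fin n) F)
    (I : Set (Fin n)) : Prop :=
  A.IsRelation I ∧ A.IsRelation (I \ {i | A.IsFrozen i})

/-!
If `e_i = c ᵥ* A⟨v;v⟩`, then setting `c_v := 0` gives a row combination `w ᵥ* A` of `A` itself that
agrees with `e_i` off column `v`, i.e. `w ᵥ* A = e_i + a e_v`. Its support is a nonempty subset of
`{i, v}`. Moreover `v` is not frozen in `A`, since otherwise `e_i = w ᵥ* A - a e_v` would lie in the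
row space. So `{i, v}` contains no frozen index and is a relation, hence a proper one.
-/

namespace Matrix

section Semiring

variable {ι κ R : Type*} [Fintype ι] [Semiring R]

lemma vecMul_mem_span_range (A : Matrix ι κ R) (y : ι → R) :
    y ᵥ* A ∈ Submodule.span R (Set.range A) :=
  (Submodule.mem_span_range_iff_exists_fun R).mpr ⟨y, (vecMul_eq_sum y A).symm⟩

lemma vecMul_updateRow_zero [DecidableEq ι] (A : Matrix ι κ R) (y : ι → R) (r : ι) :
    y ᵥ* A.updateRow r 0 = Function.update y r 0 ᵥ* A := by
  simp only [vecMul_eq_sum]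
  refine Finset.sum_congr rfl fun j _ => ?_
  rcases eq_or_ne j r with rfl | hj
  · simp
  · simp [updateRow_ne hj, Function.update_of_ne hj]

end Semiring

variable {F : Type*} [Field F] {m n : ℕ}

lemma isFrozen_iff_exists_vecMul (A : Matrix (Fin m) (Fin n) F) (i : Fin n) :
    A.IsFrozen i ↔ ∃ y : Fin m → F, y ᵥ* A = Pi.single i 1 :=
  (Submodule.mem_span_range_iff_exists_fun (v := A) F).trans (by simp only [vecMul_eq_sum])

lemma exists_vecMul_eq_single_add_single_of_isFrozen_updateCol {A : Matrix (Fin m) (Fin n) F}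
    {i k : Fin n} (h : (A.updateCol k 0).IsFrozen i) :
    ∃ (y : Fin m → F) (a : F), y ᵥ* A = Pi.single i 1 + Pi.single k a := by
  obtain ⟨y, hy⟩ := (isFrozen_iff_exists_vecMul _ i).mp h
  refine ⟨y, (y ᵥ* A) k, ?_⟩
  rw [vecMul_updateCol, dotProduct_zero, Pi.update_eq_sub_add_single, Pi.single_zero, add_zero,
    sub_eq_iff_eq_add] at hy
  exact hy

lemma not_isFrozen_of_vecMul_eq_single_add_single {A : Matrix (Fin m) (Fin n) F} {i k : Fin n}
    {y : Fin m → F} {a : F} (hy : y ᵥ* A = Pi.single i 1 + Pi.single k a)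
    (hi : ¬ A.IsFrozen i) : ¬ A.IsFrozen k := by
  intro hk
  apply hi
  have hsingle : (Pi.single i 1 : Fin n → F) = y ᵥ* A - a • Pi.single k 1 := by
    rw [hy, ← Pi.single_smul', smul_eq_mul, mul_one, add_sub_cancel_right]
  rw [IsFrozen, hsingle]
  exact Submodule.sub_mem _ (vecMul_mem_span_range A y) (Submodule.smul_mem _ a hk)

lemma isRelation_pair_of_vecMul_eq {A : Matrix (Fin m) (Fin n) F} {i k : Fin n} (hik : i ≠ k)
    {y : Fin m → F} {a : F} (hy : y ᵥ* A = Pi.single i 1 + Pi.single k a) :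
    A.IsRelation {i, k} := by
  refine ⟨y, ⟨i, by simp [hy, Pi.single_eq_of_ne hik]⟩, fun j hj => ?_⟩
  by_contra hjik
  simp only [Set.mem_insert_iff, Set.mem_singleton_iff, not_or] at hjik
  exact hj (by simp [hy, Pi.single_eq_of_ne hjik.1, Pi.single_eq_of_ne hjik.2])

lemma IsRelation.isProperRelation {A : Matrix (Fin m) (Fin n) F} {I : Set (Fin n)}
    (hI : A.IsRelation I) (hfree : ∀ j ∈ I, ¬ A.IsFrozen j) : A.IsProperRelation I := by
  refine ⟨hI, ?_⟩
  have hdisj : Disjoint I {j | A.IsFrozen j} := Set.disjoint_left.mpr hfree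
  rwa [sdiff_eq_left.mpr hdisj]

end Matrix

/-- If `i ≠ v` becomes frozen after zeroing row `v` and column `v` of `A`, while `i` was
not frozen in `A`, then `{i, v}` is a proper relation of `A`. -/
theorem stmt_8 {F : Type*} [Field F] {m n : ℕ} (A : Matrix (Fin m) (Fin n) F)
    (v : ℕ) (hvm : v < m) (hvn : v < n) (i : Fin n) (hiv : i ≠ ⟨v, hvn⟩)
    (hfrozen : Matrix.IsFrozen (Matrix.updateCol (Matrix.updateRow A ⟨v, hvm⟩ 0) ⟨v, hvn⟩ 0) i)
    (hnot : ¬ A.IsFrozen i) :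
    A.IsProperRelation {i, ⟨v, hvn⟩} := by
  obtain ⟨y, a, hy⟩ :=
    Matrix.exists_vecMul_eq_single_add_single_of_isFrozen_updateCol hfrozen
  rw [Matrix.vecMul_updateRow_zero] at hy
  have hv : ¬ A.IsFrozen ⟨v, hvn⟩ := Matrix.not_isFrozen_of_vecMul_eq_single_add_single hy hnot
  refine (Matrix.isRelation_pair_of_vecMul_eq hiv hy).isProperRelation ?_
  rintro j (rfl | rfl)
  exacts [hnot, hv]
end

section
/- Let F be a field and A ∈ F^{n×n} a symmetric matrix. Suppose u, v ∈ [n] with u ≠ v are such that A(v,u) ≠ 0 and A(v,j) = 0 for all j ≠ u (so, viewing A as a weighted adjacency matrix, v is a degree-1 vertex whose unique neighbor is u). Then rank(A) = rank(A⟨u,v;u,v⟩) + 2, where A⟨u,v;u,v⟩ is the matrix obtained from A by replacing rows u, v and columns u, v by zero rows and zero columns. In other words, removing a leaf together with its unique neighbor decreases the rank of the (weighted) adjacency matrix by exactly 2, over any field and for any nonzero edge weights. -/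
/-!
Row `v` of `A` is a nonzero multiple of the unit vector `e_u`, and column `v` vanishes off
row `u`. Subtracting a multiple of row `v` from any row `j ∉ {u, v}` therefore turns it into
row `j` of `A⟨u,v;u,v⟩`, so the row space of `A` is the row space of `A⟨u,v;u,v⟩` plus the
span of rows `u` and `v`. The rows of `A⟨u,v;u,v⟩` vanish at the coordinates `v, u`, where
rows `u` and `v` read `(A u v, A u u)` and `(0, A v u)`; these are independent, so the sum is
direct and adds `2` to the dimension.
-/

open Module Submodule

theorem Submodule.finrank_sup_span_range_eq_add_card {K V V' ι : Type*} [DivisionRing K]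
    [AddCommGroup V] [Module K V] [FiniteDimensional K V] [AddCommGroup V'] [Module K V']
    [Fintype ι] {W : Submodule K V} {φ : V →ₗ[K] V'} (hW : W ≤ LinearMap.ker φ)
    {x : ι → V} (hx : LinearIndependent K (φ ∘ x)) :
    finrank K ↥(W ⊔ span K (Set.range x)) = finrank K W + Fintype.card ι := by
  have hdisj : Disjoint W (span K (Set.range x)) :=
    (Submodule.range_ker_disjoint hx).symm.mono_left hW
  have hdim := Submodule.finrank_sup_add_finrank_inf_eq W (span K (Set.range x))
  rwa [hdisj.eq_bot, finrank_bot, add_zero, finrank_span_eq_card (hx.of_comp φ)] at hdim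

namespace Matrix

variable {F ι : Type*} [Field F]

theorem linearIndependent_funLeft_rows {A : Matrix ι ι F} {u v : ι} (huv : u ≠ v)
    (hvu : A v u ≠ 0) (hAuv : A u v ≠ 0) (hrow : ∀ j, j ≠ u → A v j = 0) :
    LinearIndependent F (LinearMap.funLeft F F ![v, u] ∘ ![A u, A v]) := by
  have hvv : A v v = 0 := hrow v huv.symm
  rw [show LinearMap.funLeft F F ![v, u] ∘ ![A u, A v] = ![![A u v, A u u], ![0, A v u]] by
    ext i j; fin_cases i <;> fin_cases j <;> simp [hvv]]
  refine LinearIndependent.pair_iff.mpr fun s t hst => ?_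
  have h0 := congrFun hst 0
  have h1 := congrFun hst 1
  simp only [Pi.add_apply, Pi.smul_apply, smul_eq_mul, cons_val_zero, cons_val_one,
    Pi.zero_apply, mul_zero, add_zero] at h0 h1
  have hs : s = 0 := (mul_eq_zero.mp h0).resolve_right hAuv
  subst hs
  simpa [hvu] using h1

variable [DecidableEq ι]

/-- `A⟨u,v;u,v⟩`: rows and columns `u` and `v` of `A` replaced by zeros. -/
def zeroRowsColsPair (A : Matrix ι ι F) (u v : ι) : Matrix ι ι F :=
  of fun k l => if k = u ∨ k = v ∨ l = u ∨ l = v then 0 else A k l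

variable {A : Matrix ι ι F} {u v : ι}

theorem zeroRowsColsPair_row_mem_ker (k : ι) :
    zeroRowsColsPair A u v k ∈ LinearMap.ker (LinearMap.funLeft F F ![v, u]) := by
  ext i
  fin_cases i <;> simp [zeroRowsColsPair]

theorem zeroRowsColsPair_row_of_mem_pair {k : ι} (hk : k = u ∨ k = v) :
    zeroRowsColsPair A u v k = 0 := by
  ext l
  exact if_pos (by tauto)

theorem row_eq_zeroRowsColsPair_row_add_smul (huv : u ≠ v) (hvu : A v u ≠ 0)
    (hrow : ∀ j, j ≠ u → A v j = 0) (hcol : ∀ i, i ≠ u → A i v = 0)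
    {j : ι} (hju : j ≠ u) (hjv : j ≠ v) :
    A j = zeroRowsColsPair A u v j + (A j u / A v u) • A v := by
  ext l
  by_cases hlu : l = u
  · simp [zeroRowsColsPair, hlu, div_mul_cancel₀ _ hvu]
  by_cases hlv : l = v
  · simp [zeroRowsColsPair, hlv, hcol j hju, hrow v huv.symm]
  · simp [zeroRowsColsPair, hju, hjv, hlu, hlv, hrow l hlu]

theorem span_rows_eq_sup (huv : u ≠ v) (hvu : A v u ≠ 0) (hrow : ∀ j, j ≠ u → A v j = 0)
    (hcol : ∀ i, i ≠ u → A i v = 0) :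
    span F (Set.range A) =
      span F (Set.range (zeroRowsColsPair A u v)) ⊔ span F (Set.range ![A u, A v]) := by
  rw [← span_union]
  refine span_eq_span ?_ ?_
  · rintro _ ⟨j, rfl⟩
    by_cases hju : j = u
    · exact subset_span (.inr ⟨0, by simp [hju]⟩)
    by_cases hjv : j = v
    · exact subset_span (.inr ⟨1, by simp [hjv]⟩)
    rw [row_eq_zeroRowsColsPair_row_add_smul huv hvu hrow hcol hju hjv]
    exact add_mem (subset_span (.inl ⟨j, rfl⟩)) (smul_mem _ _ (subset_span (.inr ⟨1, rfl⟩)))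
  · rintro _ (⟨j, rfl⟩ | ⟨i, rfl⟩)
    · by_cases hj : j = u ∨ j = v
      · rw [zeroRowsColsPair_row_of_mem_pair hj]
        exact zero_mem _
      push Not at hj
      rw [eq_sub_of_add_eq (row_eq_zeroRowsColsPair_row_add_smul huv hvu hrow hcol hj.1 hj.2).symm]
      exact sub_mem (subset_span ⟨j, rfl⟩) (smul_mem _ _ (subset_span ⟨v, rfl⟩))
    · fin_cases i
      exacts [subset_span ⟨u, rfl⟩, subset_span ⟨v, rfl⟩]

theorem rank_eq_rank_zeroRowsColsPair_add_two [Fintype ι] (huv : u ≠ v)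
    (hvu : A v u ≠ 0) (hAuv : A u v ≠ 0) (hrow : ∀ j, j ≠ u → A v j = 0)
    (hcol : ∀ i, i ≠ u → A i v = 0) :
    A.rank = (zeroRowsColsPair A u v).rank + 2 := by
  have hker : span F (Set.range (zeroRowsColsPair A u v)) ≤
      LinearMap.ker (LinearMap.funLeft F F ![v, u]) :=
    span_le.mpr (Set.range_subset_iff.mpr zeroRowsColsPair_row_mem_ker)
  rw [rank_eq_finrank_span_row, rank_eq_finrank_span_row, row_def, row_def,
    span_rows_eq_sup huv hvu hrow hcol,
    finrank_sup_span_range_eq_add_card hker (linearIndependent_funLeft_rows huv hvu hAuv hrow)]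
  rfl

end Matrix

/-- Removing a leaf (a degree-one vertex `v`) together with its unique neighbor `u`
decreases the rank of the weighted adjacency matrix by exactly `2`, over any field and for
any nonzero edge weights: if `A` is symmetric, `A v u ≠ 0` and `A v j = 0` for `j ≠ u`,
then `rank A = rank A⟨u,v;u,v⟩ + 2`. -/
theorem stmt_11 {F : Type*} [Field F] {n : ℕ} (A : Matrix (Fin n) (Fin n) F)
    (hA : A.IsSymm) (u v : Fin n) (huv : u ≠ v)
    (hvu : A v u ≠ 0) (hrow : ∀ j : Fin n, j ≠ u → A v j = 0) :
    A.rank =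
      (Matrix.of fun k l : Fin n =>
        if k = u ∨ k = v ∨ l = u ∨ l = v then (0 : F) else A k l).rank + 2 := by
  exact Matrix.rank_eq_rank_zeroRowsColsPair_add_two huv hvu (hA.apply v u ▸ hvu) hrow
    fun i hi => (hA.apply v i).trans (hrow i hi)
end

section
/- Let G be a finite simple graph on vertex set [n], F a field, and A ∈ F^{n×n} a symmetric matrix such that for all i, j ∈ [n]: A(i,j) ≠ 0 if and only if i ≠ j and {i,j} is an edge of G. Then for every positive integer f, ν(G) ≥ ((f−1)/(2f))·rank_F(A) − (1/2)·∑_{k odd, 3 ≤ k < f} c_k(G), where ν(G) is the matching number of G and c_k(G) is the number of cycles of length k in G. -/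
/-- The matching number of a graph: the largest cardinality of a set of pairwise
disjoint edges. -/
noncomputable def matchingNumber {V : Type*} (G : SimpleGraph V) : ℕ :=
  sSup {m : ℕ | ∃ M : Finset (Sym2 V), (↑M : Set (Sym2 V)) ⊆ G.edgeSet ∧
    (∀ e ∈ M, ∀ e' ∈ M, e ≠ e' → ∀ v : V, ¬(v ∈ e ∧ v ∈ e')) ∧ M.card = m}

/-- The number of cycles of length `k` in `G`: the number of connected `2`-regular
subgraphs of `G` with exactly `k` vertices. -/
noncomputable def cycleCount {V : Type*} (G : SimpleGraph V) (k : ℕ) : ℕ :=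
  Set.ncard {H : G.Subgraph | H.verts.ncard = k ∧ H.Connected ∧
    ∀ v ∈ H.verts, (H.neighborSet v).ncard = 2}

/-!
A nonsingular `r × r` submatrix of `A`, `r = rank A`, has a nonzero term in its determinant
expansion: a bijection from its rows `R` to its columns along edges of `G`. Extended to a
permutation `π` of the vertices, every `v ∈ R` is adjacent to `π v`, and the arcs `v ↦ π v`
(`v ∈ R`) form vertex-disjoint paths and cycles. A path start `v` (not hit by `π` from `R`) gives
the edge `v (π v)` at the cost of at most two elements of `R`; a whole cycle of length `k` gives
`⌊k/2⌋` disjoint edges, short by `1/2` only when `k` is odd, and an odd cycle shorter than `f`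
is charged to `c_k`. Peeling these off `R` one at a time yields
`f r ≤ 2 f ν(G) + f ∑ c_k + r`.
-/

open Finset Function Equiv

theorem Equiv.Perm.exists_apply_eq_of_injective {ι α : Type*} [Finite α] {a b : ι → α}
    (ha : Injective a) (hb : Injective b) : ∃ π : Perm α, ∀ i, π (a i) = b i := by
  classical
  let e : Set.range a ≃ Set.range b :=
    (Equiv.ofInjective a ha).symm.trans (Equiv.ofInjective b hb)
  refine ⟨e.extendSubtype, fun i => ?_⟩
  rw [e.extendSubtype_apply_of_mem (a i) ⟨i, rfl⟩]
  simp [e]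

section LinearAlgebra

variable {K M ι : Type*} [Field K] [AddCommGroup M] [Module K M]

theorem exists_fin_linearIndependent_comp [Finite ι] {v : ι → M} {k : ℕ}
    (hk : Module.finrank K (Submodule.span K (Set.range v)) = k) :
    ∃ a : Fin k → ι, LinearIndependent K (v ∘ a) := by
  obtain ⟨κ, a, ha, hspan, hli⟩ := exists_linearIndependent' K v
  have : Finite κ := Finite.of_injective a ha
  have : Fintype κ := Fintype.ofFinite κ
  have hcard : Fintype.card κ = k := by rw [← hk, ← hspan, finrank_span_eq_card hli]
  let e := Fintype.equivFinOfCardEq hcard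
  exact ⟨a ∘ e.symm, hli.comp _ e.symm.injective⟩

theorem Matrix.exists_submatrix_det_ne_zero {m n : Type*} [Fintype m] [Fintype n]
    (A : Matrix m n K) :
    ∃ (r : Fin A.rank → m) (c : Fin A.rank → n),
      Injective r ∧ Injective c ∧ (A.submatrix r c).det ≠ 0 := by
  obtain ⟨r, hr⟩ := exists_fin_linearIndependent_comp A.rank_eq_finrank_span_row.symm
  have hB : (A.submatrix r id).rank = A.rank := by
    rw [rank_eq_finrank_span_row, show (A.submatrix r id).row = A.row ∘ r from rfl,
      finrank_span_eq_card hr, Fintype.card_fin]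
  obtain ⟨c, hc⟩ := exists_fin_linearIndependent_comp
    (((A.submatrix r id).rank_eq_finrank_span_cols).symm.trans hB)
  have hunit : IsUnit ((A.submatrix r id).submatrix id c) :=
    Matrix.linearIndependent_cols_iff_isUnit.mp hc
  refine ⟨r, c, hr.injective.of_comp, hc.injective.of_comp, ?_⟩
  exact ((Matrix.isUnit_iff_isUnit_det _).mp hunit).ne_zero

theorem Matrix.exists_perm_apply_ne_zero_of_det_ne_zero {m R : Type*} [Fintype m] [DecidableEq m]
    [CommRing R] {C : Matrix m m R} (h : C.det ≠ 0) : ∃ σ : Perm m, ∀ i, C (σ i) i ≠ 0 := by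
  by_contra! hC
  refine h (C.det_apply.trans (sum_eq_zero fun σ _ => ?_))
  obtain ⟨i, hi⟩ := hC σ
  exact smul_eq_zero_of_right _ (prod_eq_zero (mem_univ i) hi)

theorem Matrix.exists_perm_finset_card_eq_rank {m : Type*} [Fintype m] [DecidableEq m]
    (A : Matrix m m K) : ∃ (π : Perm m) (S : Finset m), #S = A.rank ∧ ∀ i ∈ S, A i (π i) ≠ 0 := by
  obtain ⟨r, c, hr, hc, hdet⟩ := A.exists_submatrix_det_ne_zero
  obtain ⟨σ, hσ⟩ := exists_perm_apply_ne_zero_of_det_ne_zero hdet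
  obtain ⟨π, hπ⟩ := Perm.exists_apply_eq_of_injective (hr.comp σ.injective) hc
  refine ⟨π, univ.image (r ∘ σ), ?_, ?_⟩
  · rw [card_image_of_injective _ (hr.comp σ.injective), card_univ, Fintype.card_fin]
  · simp only [mem_image, mem_univ, true_and]
    rintro _ ⟨i, rfl⟩
    rw [hπ]
    exact hσ i

end LinearAlgebra

section Graph

variable {V : Type*}

def IsVertexDisjoint (M : Finset (Sym2 V)) : Prop :=
  ∀ e ∈ M, ∀ e' ∈ M, e ≠ e' → ∀ v : V, ¬(v ∈ e ∧ v ∈ e')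

namespace IsVertexDisjoint

theorem singleton (e : Sym2 V) : IsVertexDisjoint {e} := by
  simp [IsVertexDisjoint]

variable [DecidableEq V] {M N : Finset (Sym2 V)}

theorem union (hM : IsVertexDisjoint M) (hN : IsVertexDisjoint N)
    (hMN : ∀ e ∈ M, ∀ e' ∈ N, ∀ x ∈ e, x ∉ e') : IsVertexDisjoint (M ∪ N) := by
  intro e he e' he' hne x ⟨hx, hx'⟩
  rcases mem_union.1 he with he | he <;> rcases mem_union.1 he' with he' | he'
  · exact hM e he e' he' hne x ⟨hx, hx'⟩
  · exact hMN e he e' he' x hx hx'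
  · exact hMN e' he' e he x hx' hx
  · exact hN e he e' he' hne x ⟨hx, hx'⟩

end IsVertexDisjoint

theorem disjoint_of_forall_notMem {M N : Finset (Sym2 V)}
    (hMN : ∀ e ∈ M, ∀ e' ∈ N, ∀ x ∈ e, x ∉ e') : Disjoint M N := by
  refine disjoint_left.2 fun e he he' => ?_
  induction e using Sym2.ind with
  | _ x y => exact hMN _ he _ he' x (Sym2.mem_mk_left x y) (Sym2.mem_mk_left x y)

theorem card_le_matchingNumber [Finite V] {G : SimpleGraph V} {M : Finset (Sym2 V)}
    (hMG : (M : Set (Sym2 V)) ⊆ G.edgeSet) (hM : IsVertexDisjoint M) :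
    #M ≤ matchingNumber G := by
  refine le_csSup ⟨Nat.card (Sym2 V), ?_⟩ ⟨M, hMG, hM, rfl⟩
  rintro _ ⟨M', -, -, rfl⟩
  rw [← Set.ncard_coe_finset]
  exact Set.ncard_le_card _

section Orbit

variable (π : Perm V) (v : V)

noncomputable def orbitFinset [DecidableEq V] : Finset V :=
  (range (minimalPeriod π v)).image (π^[·] v)

noncomputable def orbitPairs [DecidableEq V] : Finset (Sym2 V) :=
  (range (minimalPeriod π v / 2)).image fun m => s(π^[2 * m] v, π^[2 * m + 1] v)

theorem Equiv.Perm.minimalPeriod_pos [Finite V] : 0 < minimalPeriod π v :=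
  minimalPeriod_pos_of_mem_periodicPts (π.injective.mem_periodicPts v)

theorem Equiv.Perm.two_le_minimalPeriod [Finite V] (hv : π v ≠ v) : 2 ≤ minimalPeriod π v := by
  have := π.minimalPeriod_pos v
  have : minimalPeriod π v ≠ 1 := fun h => hv (minimalPeriod_eq_one_iff_isFixedPt.1 h)
  omega

variable {π v} in
theorem eq_of_mem_orbitPair {a b : ℕ} (ha : a < minimalPeriod π v / 2)
    (hb : b < minimalPeriod π v / 2) {x : V} (hxa : x ∈ s(π^[2 * a] v, π^[2 * a + 1] v))
    (hxb : x ∈ s(π^[2 * b] v, π^[2 * b + 1] v)) : a = b := by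
  have key : ∀ c, x ∈ s(π^[2 * c] v, π^[2 * c + 1] v) → ∃ i < 2, π^[2 * c + i] v = x := by
    intro c hc
    rcases Sym2.mem_iff.1 hc with rfl | rfl
    exacts [⟨0, by omega, rfl⟩, ⟨1, by omega, rfl⟩]
  obtain ⟨i, hi, rfl⟩ := key a hxa
  obtain ⟨j, hj, hij⟩ := key b hxb
  have := iterate_injOn_Iio_minimalPeriod (f := π) (x := v) (Set.mem_Iio.2 (by omega))
    (Set.mem_Iio.2 (by omega)) hij
  omega

variable [DecidableEq V]

theorem card_orbitFinset : #(orbitFinset π v) = minimalPeriod π v := by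
  rw [orbitFinset, card_image_of_injOn, card_range]
  simpa [Set.InjOn] using iterate_injOn_Iio_minimalPeriod (f := π) (x := v)

theorem card_orbitPairs : #(orbitPairs π v) = minimalPeriod π v / 2 := by
  rw [orbitPairs, card_image_of_injOn, card_range]
  intro a ha b hb hab
  simp only [coe_range, Set.mem_Iio] at ha hb hab
  exact eq_of_mem_orbitPair ha hb (Sym2.mem_mk_left _ _) (hab ▸ Sym2.mem_mk_left _ _)

theorem isVertexDisjoint_orbitPairs : IsVertexDisjoint (orbitPairs π v) := by
  simp only [IsVertexDisjoint, orbitPairs, mem_image, mem_range]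
  rintro _ ⟨a, ha, rfl⟩ _ ⟨b, hb, rfl⟩ hne x ⟨hxa, hxb⟩
  exact hne (by rw [eq_of_mem_orbitPair ha hb hxa hxb])

variable [Finite V] {π v}

theorem mem_orbitFinset {u : V} : u ∈ orbitFinset π v ↔ ∃ m, π^[m] v = u := by
  simp only [orbitFinset, mem_image, mem_range]
  constructor
  · rintro ⟨m, -, rfl⟩
    exact ⟨m, rfl⟩
  · rintro ⟨m, rfl⟩
    exact ⟨m % minimalPeriod π v, Nat.mod_lt _ (π.minimalPeriod_pos v),
      iterate_mod_minimalPeriod_eq⟩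

theorem iterate_mem_orbitFinset (m : ℕ) : π^[m] v ∈ orbitFinset π v :=
  mem_orbitFinset.2 ⟨m, rfl⟩

theorem apply_mem_orbitFinset {u : V} : π u ∈ orbitFinset π v ↔ u ∈ orbitFinset π v := by
  simp only [mem_orbitFinset]
  constructor
  · rintro ⟨m, hm⟩
    refine ⟨m + (minimalPeriod π v - 1), π.injective ?_⟩
    have := π.minimalPeriod_pos v
    rw [← hm, ← iterate_succ_apply' π, Nat.succ_eq_add_one,
      show m + (minimalPeriod π v - 1) + 1 = m + minimalPeriod π v by omega,
      iterate_add_apply, iterate_minimalPeriod]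
  · rintro ⟨m, rfl⟩
    exact ⟨m + 1, iterate_succ_apply' π m v⟩

theorem symm_apply_mem_orbitFinset {u : V} (hu : u ∈ orbitFinset π v) :
    π.symm u ∈ orbitFinset π v := by
  rwa [← apply_mem_orbitFinset, π.apply_symm_apply]

theorem minimalPeriod_eq_of_mem_orbitFinset {u : V} (hu : u ∈ orbitFinset π v) :
    minimalPeriod π u = minimalPeriod π v := by
  obtain ⟨m, rfl⟩ := mem_orbitFinset.1 hu
  exact minimalPeriod_apply_iterate (π.injective.mem_periodicPts v) m

theorem orbitFinset_subset {S : Finset V} (hS : Set.MapsTo π S S) (hv : v ∈ S) :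
    orbitFinset π v ⊆ S := by
  intro u hu
  obtain ⟨m, rfl⟩ := mem_orbitFinset.1 hu
  exact hS.iterate m hv

theorem exists_mem_eq_of_mem_orbitPairs {e : Sym2 V} (he : e ∈ orbitPairs π v) :
    ∃ u ∈ orbitFinset π v, e = s(u, π u) := by
  obtain ⟨m, -, rfl⟩ := mem_image.1 he
  exact ⟨π^[2 * m] v, iterate_mem_orbitFinset _, by rw [iterate_succ_apply' π (2 * m) v]⟩

end Orbit

-- An orbit of length `k` carries `⌊k/2⌋` disjoint arcs; for odd `k` the missing `1/2` is paid by
-- counting the cycle when `k < f`, and by the slack `k ≥ f` otherwise.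
theorem mul_le_two_mul_mul_div_two_add (f k : ℕ) :
    f * k ≤ 2 * f * (k / 2) + f * (if Odd k ∧ k < f then 1 else 0) + k := by
  rcases Nat.even_or_odd' k with ⟨j, rfl | rfl⟩
  · rw [Nat.mul_div_cancel_left j two_pos]
    nlinarith [Nat.zero_le (f * if Odd (2 * j) ∧ 2 * j < f then 1 else 0)]
  · rw [show (2 * j + 1) / 2 = j by omega]
    split_ifs with h
    · nlinarith
    · have : f ≤ 2 * j + 1 := by simp only [odd_two_mul_add_one, true_and] at h; omega
      nlinarith

abbrev shortOddLengths (f : ℕ) : Finset ℕ := (range f).filter fun k => Odd k ∧ 3 ≤ k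

-- A witness of the bound for `S`: disjoint arcs `s(u, π u)` with `u ∈ S`, and short odd
-- `π`-cycles inside `S`. `card_le` is `(f - 1) #S ≤ 2 f #pairs + f #cycles` without subtraction.
structure Peeling [DecidableEq V] (π : Perm V) (f : ℕ) (S : Finset V) where
  pairs : Finset (Sym2 V)
  cycles : Finset (Finset V)
  exists_mem_eq_of_mem_pairs : ∀ e ∈ pairs, ∃ u ∈ S, e = s(u, π u)
  isVertexDisjoint_pairs : IsVertexDisjoint pairs
  cycles_spec : ∀ O ∈ cycles, O ⊆ S ∧ (∃ v, O = orbitFinset π v) ∧ #O ∈ shortOddLengths f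
  card_le : f * #S ≤ 2 * f * #pairs + f * #cycles + #S

namespace Peeling

variable [DecidableEq V] {π : Perm V} {f : ℕ}

def empty : Peeling π f ∅ :=
  ⟨∅, ∅, by simp, by simp [IsVertexDisjoint], by simp, by simp⟩

theorem nonempty_of_arc {S : Finset V} {v : V} (hv : v ∈ S) (hvπ : v ∉ S.image π)
    (P : Peeling π f (S \ {v, π v})) : Nonempty (Peeling π f S) := by
  have hfresh : ∀ e ∈ ({s(v, π v)} : Finset _), ∀ e' ∈ P.pairs, ∀ x ∈ e, x ∉ e' := by
    intro e he e' he' x hx hx'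
    obtain ⟨u, hu, rfl⟩ := P.exists_mem_eq_of_mem_pairs e' he'
    simp only [mem_sdiff, mem_insert, mem_singleton, not_or] at hu
    rw [mem_singleton.1 he] at hx
    have hvu : π u ≠ v := fun h => hvπ (mem_image.2 ⟨u, hu.1, h⟩)
    rcases Sym2.mem_iff.1 hx with rfl | rfl <;> rcases Sym2.mem_iff.1 hx' with h | h
    exacts [hu.2.1 h.symm, hvu h.symm, hu.2.2 h.symm, hu.2.1 (π.injective h).symm]
  refine ⟨⟨{s(v, π v)} ∪ P.pairs, P.cycles, ?_, ?_, ?_, ?_⟩⟩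
  · simp only [mem_union, mem_singleton]
    rintro e (rfl | he)
    · exact ⟨v, hv, rfl⟩
    · obtain ⟨u, hu, rfl⟩ := P.exists_mem_eq_of_mem_pairs e he
      exact ⟨u, (mem_sdiff.1 hu).1, rfl⟩
  · exact (IsVertexDisjoint.singleton _).union P.isVertexDisjoint_pairs hfresh
  · intro O hO
    obtain ⟨hOS, hO⟩ := P.cycles_spec O hO
    exact ⟨hOS.trans sdiff_subset, hO⟩
  · rw [card_union_of_disjoint (disjoint_of_forall_notMem hfresh), card_singleton]
    have h₁ : #S ≤ #(S \ {v, π v}) + 2 :=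
      card_le_card_sdiff_add_card.trans (add_le_add_right card_le_two _)
    have h₂ : #(S \ {v, π v}) ≤ #S := card_le_card sdiff_subset
    nlinarith [P.card_le]

variable [Finite V]

theorem nonempty_of_orbit {S : Finset V} {v : V} (hv : π v ≠ v) (hvS : orbitFinset π v ⊆ S)
    (P : Peeling π f (S \ orbitFinset π v)) : Nonempty (Peeling π f S) := by
  set O := orbitFinset π v
  set k := minimalPeriod π v
  have hvO : v ∈ O := iterate_mem_orbitFinset 0
  have hk := π.two_le_minimalPeriod v hv
  have hfresh : ∀ e ∈ P.pairs, ∀ e' ∈ orbitPairs π v, ∀ x ∈ e, x ∉ e' := by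
    intro e he e' he' x hx hx'
    obtain ⟨u, hu, rfl⟩ := P.exists_mem_eq_of_mem_pairs e he
    obtain ⟨w, hw, rfl⟩ := exists_mem_eq_of_mem_orbitPairs he'
    have hxO : x ∈ O := by
      rcases Sym2.mem_iff.1 hx' with rfl | rfl
      exacts [hw, apply_mem_orbitFinset.2 hw]
    rcases Sym2.mem_iff.1 hx with rfl | rfl
    exacts [(mem_sdiff.1 hu).2 hxO, (mem_sdiff.1 hu).2 (apply_mem_orbitFinset.1 hxO)]
  have hOC : O ∉ P.cycles := fun h => (mem_sdiff.1 ((P.cycles_spec O h).1 hvO)).2 hvO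
  refine ⟨⟨P.pairs ∪ orbitPairs π v,
    if Odd k ∧ k < f then insert O P.cycles else P.cycles, ?_, ?_, ?_, ?_⟩⟩
  · simp only [mem_union]
    rintro e (he | he)
    · obtain ⟨u, hu, rfl⟩ := P.exists_mem_eq_of_mem_pairs e he
      exact ⟨u, (mem_sdiff.1 hu).1, rfl⟩
    · obtain ⟨u, hu, rfl⟩ := exists_mem_eq_of_mem_orbitPairs he
      exact ⟨u, hvS hu, rfl⟩
  · exact P.isVertexDisjoint_pairs.union (isVertexDisjoint_orbitPairs π v) hfresh
  · have hP : ∀ O' ∈ P.cycles, O' ⊆ S ∧ (∃ w, O' = orbitFinset π w) ∧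
        #O' ∈ shortOddLengths f := fun O' hO' =>
      ⟨(P.cycles_spec O' hO').1.trans sdiff_subset, (P.cycles_spec O' hO').2⟩
    split_ifs with hkf
    · simp only [mem_insert, forall_eq_or_imp]
      refine ⟨⟨hvS, ⟨v, rfl⟩, ?_⟩, hP⟩
      rw [card_orbitFinset, mem_filter, mem_range]
      exact ⟨hkf.2, hkf.1, by obtain ⟨j, hj⟩ := hkf.1; omega⟩
    · exact hP
  · have hS : #S = #(S \ O) + k := by rw [← card_sdiff_add_card_eq_card hvS, card_orbitFinset]
    have hcycles : #(if Odd k ∧ k < f then insert O P.cycles else P.cycles) =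
        #P.cycles + if Odd k ∧ k < f then 1 else 0 := by
      split_ifs
      exacts [card_insert_of_notMem hOC, rfl]
    rw [card_union_of_disjoint (disjoint_of_forall_notMem hfresh), card_orbitPairs, hcycles, hS]
    nlinarith [P.card_le, mul_le_two_mul_mul_div_two_add f k]

theorem nonempty (S : Finset V) (hS : ∀ v ∈ S, π v ≠ v) : Nonempty (Peeling π f S) := by
  induction S using Finset.strongInduction with
  | H S ih =>
  rcases S.eq_empty_or_nonempty with rfl | ⟨v, hv⟩
  · exact ⟨empty⟩
  have hsub : ∀ T ⊆ S, ∀ w ∈ T, π w ≠ w := fun T hT w hw => hS w (hT hw)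
  by_cases harc : ∃ u ∈ S, u ∉ S.image π
  · obtain ⟨u, hu, huπ⟩ := harc
    have hlt : S \ {u, π u} ⊂ S :=
      ssubset_iff_of_subset sdiff_subset |>.2 ⟨u, hu, by simp⟩
    obtain ⟨P⟩ := ih _ hlt (hsub _ hlt.subset)
    exact nonempty_of_arc hu huπ P
  · push Not at harc
    have hπS : Set.MapsTo π S S := by
      have := eq_of_subset_of_card_le harc card_image_le
      exact fun w hw => this ▸ mem_image_of_mem π hw
    have hO := orbitFinset_subset hπS hv
    have hlt : S \ orbitFinset π v ⊂ S := sdiff_ssubset hO ⟨v, iterate_mem_orbitFinset 0⟩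
    obtain ⟨P⟩ := ih _ hlt (hsub _ hlt.subset)
    exact nonempty_of_orbit (hS v hv) hO P

end Peeling

section CycleSubgraph

variable (G : SimpleGraph V) (π : Perm V)

-- Intersecting with `G.Adj` makes this a subgraph of `G` for every `O`; on a `π`-orbit whose arcs
-- are edges of `G` it is the cycle traced out by `π`.
def permSubgraph (O : Set V) : G.Subgraph where
  verts := O
  Adj a b := a ∈ O ∧ b ∈ O ∧ G.Adj a b ∧ (b = π a ∨ a = π b)
  adj_sub h := h.2.2.1
  edge_vert h := h.1
  symm := ⟨fun _ _ h => ⟨h.2.1, h.1, h.2.2.1.symm, h.2.2.2.symm⟩⟩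

variable {G π} [DecidableEq V] [Finite V] {v : V}

theorem permSubgraph_connected (hadj : ∀ u ∈ orbitFinset π v, G.Adj u (π u)) :
    (permSubgraph G π (orbitFinset π v)).Connected := by
  set H := permSubgraph G π (orbitFinset π v)
  have hv : v ∈ H.verts := iterate_mem_orbitFinset 0
  have hreach : ∀ m, H.coe.Reachable ⟨v, hv⟩ ⟨π^[m] v, iterate_mem_orbitFinset m⟩ := by
    intro m
    induction m with
    | zero => rfl
    | succ m ih =>
      refine ih.trans (SimpleGraph.Adj.reachable ?_)
      have hm := iterate_mem_orbitFinset (π := π) (v := v) m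
      show H.Adj (π^[m] v) (π^[m + 1] v)
      rw [iterate_succ_apply']
      exact ⟨hm, apply_mem_orbitFinset.2 hm, hadj _ hm, .inl rfl⟩
  refine H.connected_iff.2 ⟨⟨?_⟩, ⟨v, hv⟩⟩
  rintro ⟨a, ha⟩ ⟨b, hb⟩
  obtain ⟨i, rfl⟩ := mem_orbitFinset.1 ha
  obtain ⟨j, rfl⟩ := mem_orbitFinset.1 hb
  exact (hreach i).symm.trans (hreach j)

theorem neighborSet_permSubgraph (hadj : ∀ u ∈ orbitFinset π v, G.Adj u (π u)) {u : V}
    (hu : u ∈ orbitFinset π v) :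
    (permSubgraph G π (orbitFinset π v)).neighborSet u = {π u, π.symm u} := by
  ext w
  simp only [SimpleGraph.Subgraph.mem_neighborSet, permSubgraph, Set.mem_insert_iff,
    Set.mem_singleton_iff, mem_coe]
  constructor
  · rintro ⟨-, -, -, rfl | rfl⟩
    exacts [.inl rfl, .inr (π.symm_apply_apply w).symm]
  · rintro (rfl | rfl)
    · exact ⟨hu, apply_mem_orbitFinset.2 hu, hadj u hu, .inl rfl⟩
    · have hw := symm_apply_mem_orbitFinset hu
      exact ⟨hu, hw, (π.apply_symm_apply u ▸ hadj _ hw).symm, .inr (π.apply_symm_apply u).symm⟩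

theorem ncard_neighborSet_permSubgraph (hadj : ∀ u ∈ orbitFinset π v, G.Adj u (π u))
    (hv : 3 ≤ minimalPeriod π v) {u : V} (hu : u ∈ orbitFinset π v) :
    ((permSubgraph G π (orbitFinset π v)).neighborSet u).ncard = 2 := by
  rw [neighborSet_permSubgraph hadj hu, Set.ncard_pair]
  intro h
  have h2 : IsPeriodicPt π 2 u := by
    show π (π u) = u
    rw [h, π.apply_symm_apply]
  have := h2.minimalPeriod_le two_pos
  rw [minimalPeriod_eq_of_mem_orbitFinset hu] at this
  omega

end CycleSubgraph

theorem card_le_sum_cycleCount [DecidableEq V] [Finite V] {G : SimpleGraph V} {π : Perm V}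
    {C : Finset (Finset V)} {K : Finset ℕ}
    (hC : ∀ O ∈ C, (∃ v, O = orbitFinset π v) ∧ (∀ u ∈ O, G.Adj u (π u)) ∧ #O ∈ K ∧ 3 ≤ #O) :
    #C ≤ ∑ k ∈ K, cycleCount G k := by
  rw [card_eq_sum_card_fiberwise fun O hO => (hC O hO).2.2.1]
  refine sum_le_sum fun k _ => ?_
  rw [cycleCount, ← Set.ncard_coe_finset]
  refine Set.ncard_le_ncard_of_injOn (fun O => permSubgraph G π O) (fun O hO => ?_) ?_
  · obtain ⟨hOC, rfl⟩ := mem_filter.1 hO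
    obtain ⟨⟨v, rfl⟩, hadj, -, h3⟩ := hC O hOC
    rw [card_orbitFinset] at h3
    exact ⟨Set.ncard_coe_finset _, permSubgraph_connected hadj,
      fun u hu => ncard_neighborSet_permSubgraph hadj h3 hu⟩
  · intro O₁ _ O₂ _ h
    exact coe_injective (congrArg SimpleGraph.Subgraph.verts h)

theorem mul_card_le_of_adj [DecidableEq V] [Finite V] (G : SimpleGraph V) (π : Perm V)
    (S : Finset V) (hS : ∀ v ∈ S, G.Adj v (π v)) (f : ℕ) :
    f * #S ≤ 2 * f * matchingNumber G + f * ∑ k ∈ shortOddLengths f, cycleCount G k + #S := by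
  obtain ⟨P⟩ := Peeling.nonempty (π := π) (f := f) S fun v hv => (hS v hv).ne'
  have hP : #P.pairs ≤ matchingNumber G := by
    refine card_le_matchingNumber (fun e he => ?_) P.isVertexDisjoint_pairs
    obtain ⟨u, hu, rfl⟩ := P.exists_mem_eq_of_mem_pairs e he
    exact hS u hu
  have hC : #P.cycles ≤ ∑ k ∈ shortOddLengths f, cycleCount G k := by
    refine card_le_sum_cycleCount (π := π) fun O hO => ?_
    obtain ⟨hOS, hO, hk⟩ := P.cycles_spec O hO
    exact ⟨hO, fun u hu => hS u (hOS hu), hk, (mem_filter.1 hk).2.2⟩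
  calc f * #S ≤ 2 * f * #P.pairs + f * #P.cycles + #S := P.card_le
    _ ≤ _ := by gcongr

end Graph

theorem stmt_12_general {n : ℕ} (G : SimpleGraph (Fin n)) {F : Type*} [Field F]
    (A : Matrix (Fin n) (Fin n) F)
    (hAG : ∀ i j : Fin n, A i j ≠ 0 ↔ (i ≠ j ∧ G.Adj i j))
    (f : ℕ) (hf : 0 < f) :
    ((f - 1 : ℝ) / (2 * f)) * (A.rank : ℝ) -
        (1 / 2) * ∑ k ∈ (Finset.range f).filter (fun k => Odd k ∧ 3 ≤ k),
          (cycleCount G k : ℝ)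
      ≤ (matchingNumber G : ℝ) := by
  obtain ⟨π, S, hS, hAS⟩ := A.exists_perm_finset_card_eq_rank
  have hbound := mul_card_le_of_adj G π S (fun v hv => ((hAG v (π v)).1 (hAS v hv)).2) f
  rw [hS] at hbound
  have hbound' : (f : ℝ) * A.rank ≤ 2 * f * matchingNumber G +
      f * ∑ k ∈ shortOddLengths f, (cycleCount G k : ℝ) + A.rank := by exact_mod_cast hbound
  rw [div_mul_eq_mul_div, sub_le_iff_le_add, div_le_iff₀ (by positivity)]
  linarith

/-- For a weighted adjacency matrix `A` of a finite simple graph `G` over any field,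
`ν(G) ≥ ((f−1)/(2f))·rank(A) − (1/2)·∑_{k odd, 3 ≤ k < f} c_k(G)` for every positive
integer `f`. -/
theorem stmt_12 {n : ℕ} (G : SimpleGraph (Fin n)) {F : Type*} [Field F]
    (A : Matrix (Fin n) (Fin n) F) (hA : A.IsSymm)
    (hAG : ∀ i j : Fin n, A i j ≠ 0 ↔ (i ≠ j ∧ G.Adj i j))
    (f : ℕ) (hf : 0 < f) :
    ((f - 1 : ℝ) / (2 * f)) * (A.rank : ℝ) -
        (1 / 2) * ∑ k ∈ (Finset.range f).filter (fun k => Odd k ∧ 3 ≤ k),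
          (cycleCount G k : ℝ)
      ≤ (matchingNumber G : ℝ) :=
  stmt_12_general G A hAG f hf
end

section
/- Let ψ̂(α) = ∑_{k=0}^d q_k α^k be a real polynomial with q_k ≥ 0 for all k and ∑_{k=0}^d q_k = 1 (so ψ̂ maps [0,1] nondecreasingly into [0,1] with ψ̂(1) = 1). Define G(α) = α + ψ̂(1 − ψ̂(α)) − 1 for α ∈ [0,1]. Then: (i) G has at least one zero in [0,1]; (ii) if α ∈ [0,1] satisfies G(α) = 0, then G(1 − ψ̂(α)) = 0; (iii) the smallest zero α_* of G in [0,1] and the largest zero α^* of G in [0,1] satisfy α_* = 1 − ψ̂(α^*) and α^* = 1 − ψ̂(α_*). -/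
/-- The probability generating function `ψ̂(α) = ∑_{k=0}^d q_k α^k`. -/
noncomputable def pgf (d : ℕ) (q : ℕ → ℝ) (α : ℝ) : ℝ :=
  ∑ k ∈ Finset.range (d + 1), q k * α ^ k

/-- The fixed-point function `G(α) = α + ψ̂(1 − ψ̂(α)) − 1`. -/
noncomputable def fpG (d : ℕ) (q : ℕ → ℝ) (α : ℝ) : ℝ :=
  α + pgf d q (1 - pgf d q α) - 1

/-!
With `φ(α) = 1 − ψ̂(α)` we have `G(α) = α − φ(φ(α))`, so the zeros of `G` in `[0,1]` are the
points of period two of `φ`, a continuous antitone self-map of `[0,1]`. These exist by the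
intermediate value theorem and `φ` permutes them. Because `φ` reverses order, `φ` of the greatest
one is at least the least one and `φ` of the least one is at most the greatest one; applying `φ`
once more to the first inequality turns the second into an equality.
-/

open Set Function

section PeriodTwo

variable {α : Type*} [PartialOrder α] {s : Set α} {φ : α → α} {a b : α}

theorem AntitoneOn.apply_eq_of_isLeast_of_isGreatest_isPeriodicPt_two (hφ : AntitoneOn φ s)
    (hmaps : MapsTo φ s s) (ha : IsLeast {x ∈ s | IsPeriodicPt φ 2 x} a)
    (hb : IsGreatest {x ∈ s | IsPeriodicPt φ 2 x} b) : φ b = a ∧ φ a = b := by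
  obtain ⟨⟨has, ha2⟩, ha_le⟩ := ha
  obtain ⟨⟨hbs, hb2⟩, le_hb⟩ := hb
  have a_le : a ≤ φ b := ha_le ⟨hmaps hbs, hb2.apply⟩
  have le_b : φ a ≤ b := le_hb ⟨hmaps has, ha2.apply⟩
  have hφa : φ a = b := le_antisymm le_b <| calc
    b = φ (φ b) := hb2.symm
    _ ≤ φ a := hφ has (hmaps hbs) a_le
  refine ⟨?_, hφa⟩
  calc φ b = φ (φ a) := by rw [hφa]
    _ = a := ha2

end PeriodTwo

noncomputable def pgfCompl (d : ℕ) (q : ℕ → ℝ) (α : ℝ) : ℝ :=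
  1 - pgf d q α

section Pgf

variable {d : ℕ} {q : ℕ → ℝ}

theorem continuous_pgf : Continuous (pgf d q) := by
  unfold pgf
  fun_prop

theorem pgf_one (hsum : ∑ k ∈ Finset.range (d + 1), q k = 1) : pgf d q 1 = 1 := by
  simpa [pgf] using hsum

theorem pgf_nonneg (hq : ∀ k ≤ d, 0 ≤ q k) {α : ℝ} (hα : 0 ≤ α) : 0 ≤ pgf d q α :=
  Finset.sum_nonneg fun k hk =>
    mul_nonneg (hq k (Nat.lt_succ_iff.mp (Finset.mem_range.mp hk))) (pow_nonneg hα k)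

theorem monotoneOn_pgf (hq : ∀ k ≤ d, 0 ≤ q k) : MonotoneOn (pgf d q) (Ici 0) :=
  fun _ hα _ _ hαβ => Finset.sum_le_sum fun k hk =>
    mul_le_mul_of_nonneg_left (pow_le_pow_left₀ hα hαβ k)
      (hq k (Nat.lt_succ_iff.mp (Finset.mem_range.mp hk)))

theorem continuous_pgfCompl : Continuous (pgfCompl d q) :=
  continuous_const.sub continuous_pgf

theorem antitoneOn_pgfCompl (hq : ∀ k ≤ d, 0 ≤ q k) : AntitoneOn (pgfCompl d q) (Icc 0 1) :=
  fun _ hα _ hβ hαβ => sub_le_sub_left ((monotoneOn_pgf hq) hα.1 hβ.1 hαβ) 1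

theorem mapsTo_pgfCompl (hq : ∀ k ≤ d, 0 ≤ q k) (hsum : ∑ k ∈ Finset.range (d + 1), q k = 1) :
    MapsTo (pgfCompl d q) (Icc 0 1) (Icc 0 1) := by
  intro α hα
  have h_le_one : pgf d q α ≤ 1 :=
    pgf_one hsum ▸ monotoneOn_pgf hq hα.1 (zero_le_one' ℝ) hα.2
  exact ⟨sub_nonneg.mpr h_le_one, sub_le_self 1 (pgf_nonneg hq hα.1)⟩

theorem fpG_eq_zero_iff {α : ℝ} : fpG d q α = 0 ↔ IsPeriodicPt (pgfCompl d q) 2 α := by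
  simp only [IsPeriodicPt, IsFixedPt, iterate_succ, iterate_zero, comp_apply, id_eq, fpG,
    pgfCompl]
  constructor <;> intro h <;> linarith

end Pgf

/-- For a probability generating function `ψ̂` of a distribution on `{0,…,d}` and
`G(α) = α + ψ̂(1 − ψ̂(α)) − 1`: (i) `G` has a zero in `[0,1]`; (ii) zeros are mapped to
zeros by `α ↦ 1 − ψ̂(α)`; (iii) the least zero `α_*` and the greatest zero `α^*` in
`[0,1]` satisfy `α_* = 1 − ψ̂(α^*)` and `α^* = 1 − ψ̂(α_*)`. -/
theorem stmt_13 (d : ℕ) (q : ℕ → ℝ) (hq : ∀ k ≤ d, 0 ≤ q k)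
    (hsum : ∑ k ∈ Finset.range (d + 1), q k = 1) :
    (∃ α ∈ Set.Icc (0 : ℝ) 1, fpG d q α = 0) ∧
    (∀ α ∈ Set.Icc (0 : ℝ) 1, fpG d q α = 0 → fpG d q (1 - pgf d q α) = 0) ∧
    (∀ a b : ℝ,
      IsLeast {α : ℝ | α ∈ Set.Icc (0 : ℝ) 1 ∧ fpG d q α = 0} a →
      IsGreatest {α : ℝ | α ∈ Set.Icc (0 : ℝ) 1 ∧ fpG d q α = 0} b →
      a = 1 - pgf d q b ∧ b = 1 - pgf d q a) := by
  have hmaps := mapsTo_pgfCompl hq hsum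
  simp only [fpG_eq_zero_iff]
  refine ⟨?_, fun α _ hα => hα.apply, fun a b ha hb => ?_⟩
  · exact exists_mem_Icc_isFixedPt_of_mapsTo (continuous_pgfCompl.iterate 2).continuousOn
      zero_le_one (hmaps.iterate 2)
  · obtain ⟨hφb, hφa⟩ :=
      (antitoneOn_pgfCompl hq).apply_eq_of_isLeast_of_isGreatest_isPeriodicPt_two hmaps ha hb
    exact ⟨hφb.symm, hφa.symm⟩
end

section
/- Let ψ be a real polynomial with ψ'(1) ≠ 0, and set ψ̂(α) = ψ'(α)/ψ'(1), G(α) = α + ψ̂(1 − ψ̂(α)) − 1, and R_ψ(α) = 2 − ψ(1 − ψ̂(α)) − ψ(α) − ψ'(α)·(1 − α). Then for every α ∈ ℝ, the derivative of R_ψ satisfies R_ψ'(α) = ψ''(α)·G(α). -/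
open Polynomial

theorem hasDerivAt_rank_functional {f f' : ℝ → ℝ} {f'' c α : ℝ}
    (hf : ∀ x, HasDerivAt f (f' x) x) (hf' : HasDerivAt f' f'' α) :
    HasDerivAt (fun t => 2 - f (1 - f' t / c) - f t - f' t * (1 - t))
      (f'' * (α + f' (1 - f' α / c) / c - 1)) α := by
  have hinner : HasDerivAt (fun t => 1 - f' t / c) (-(f'' / c)) α :=
    (hf'.div_const c).const_sub 1
  have hcomp := (hf (1 - f' α / c)).comp α hinner
  have hprod := hf'.mul ((hasDerivAt_id α).const_sub 1)
  refine (((hcomp.const_sub 2).sub (hf α)).sub hprod).congr_deriv ?_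
  simp only [id]
  -- the `f' α` coming from `f t` cancels the one from the product rule
  ring

theorem stmt_14_general (ψ : Polynomial ℝ) (α : ℝ) :
    HasDerivAt
      (fun t : ℝ => 2 - ψ.eval (1 - (derivative ψ).eval t / (derivative ψ).eval 1)
        - ψ.eval t - (derivative ψ).eval t * (1 - t))
      ((derivative (derivative ψ)).eval α *
        (α + (derivative ψ).eval (1 - (derivative ψ).eval α / (derivative ψ).eval 1) /
          (derivative ψ).eval 1 - 1))
      α :=
  hasDerivAt_rank_functional ψ.hasDerivAt ((derivative ψ).hasDerivAt α)

/-- The rank functional `R_ψ(α) = 2 − ψ(1 − ψ'(α)/ψ'(1)) − ψ(α) − ψ'(α)(1−α)` has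
derivative `R_ψ'(α) = ψ''(α)·G(α)`, where `G(α) = α + ψ̂(1 − ψ̂(α)) − 1` and
`ψ̂ = ψ'/ψ'(1)`. -/
theorem stmt_14 (ψ : Polynomial ℝ) (h1 : (derivative ψ).eval 1 ≠ 0) (α : ℝ) :
    HasDerivAt
      (fun t : ℝ => 2 - ψ.eval (1 - (derivative ψ).eval t / (derivative ψ).eval 1)
        - ψ.eval t - (derivative ψ).eval t * (1 - t))
      ((derivative (derivative ψ)).eval α *
        (α + (derivative ψ).eval (1 - (derivative ψ).eval α / (derivative ψ).eval 1) /
          (derivative ψ).eval 1 - 1))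
      α :=
  stmt_14_general ψ α
end

section
/- Let F be a field, A ∈ F^{n×n} a symmetric matrix, and v ∈ [n] with A(v,v) = 0. Let S = supp(A(v,·)) = {k ∈ [n] : A(v,k) ≠ 0}. Suppose that for every i ∈ S there exists a row vector y ∈ F^{1×n} with y_k = 0 for all k ∈ S and y·A⟨v;v⟩ = e_n(i), where A⟨v;v⟩ is A with row v and column v zeroed. Then the v-th row A(v,·) lies in the span of the remaining rows {A(j,·) : j ∈ [n], j ≠ v}; in particular rank(A) = rank(A⟨v;⟩). -/
/-!
Let `S` be the support of row `v` and `B = A⟨v;v⟩`. Combining the given vectors with the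
coefficients `A v i` yields `z`, vanishing on `S`, with `z B = A v`. Since column `v` of `B`
is zero, `z B` is `z A⟨v;⟩` with its `v`-th entry replaced by `0`; that entry is
`∑ⱼ z j * A j v = ∑ⱼ A v j * z j = 0` by symmetry, because `z` vanishes on `S`. Hence
`A v = z A⟨v;⟩` is a combination of the rows `A j` with `j ≠ v`.
-/

open Set Submodule

theorem Submodule.mem_of_forall_single_mem {R n : Type*} [Semiring R] [Fintype n] [DecidableEq n]
    {P : Submodule R (n → R)} {u : n → R} (h : ∀ i, u i ≠ 0 → Pi.single i 1 ∈ P) : u ∈ P := by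
  rw [← Finset.univ_sum_single u]
  refine sum_mem fun i _ => ?_
  by_cases hi : u i = 0
  · simp [hi]
  · simpa [← Pi.single_smul] using P.smul_mem (u i) (h i hi)

namespace Matrix

variable {R m n : Type*}

theorem vecMul_mem_span_range_s16 [Semiring R] [Fintype m] (x : m → R) (M : Matrix m n R) :
    x ᵥ* M ∈ span R (range M) :=
  range_vecMulLinear M ▸ LinearMap.mem_range_self M.vecMulLinear x

theorem vecMul_updateRow_zero_s16 [NonUnitalNonAssocSemiring R] [Fintype m] [DecidableEq m]
    (x : m → R) (M : Matrix m n R) (i : m) :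
    x ᵥ* M.updateRow i 0 = Function.update x i 0 ᵥ* M := by
  ext k
  refine Finset.sum_congr rfl fun j _ => ?_
  by_cases hj : j = i <;> simp [hj]

theorem IsSymm.vecMul_apply_eq_zero [NonUnitalCommSemiring R] [Fintype n] {A : Matrix n n R}
    (hA : A.IsSymm) {v : n} {x : n → R} (hx : ∀ k, A v k ≠ 0 → x k = 0) : (x ᵥ* A) v = 0 := by
  calc (x ᵥ* A) v = (A *ᵥ x) v := by rw [← vecMul_transpose, hA.eq]
    _ = ∑ k, A v k * x k := rfl
    _ = 0 := Finset.sum_eq_zero fun k _ => by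
      by_cases hk : A v k = 0 <;> simp [hk, hx]

theorem IsSymm.vecMul_updateCol_updateRow_zero [NonUnitalCommSemiring R] [Fintype n]
    [DecidableEq n] {A : Matrix n n R} (hA : A.IsSymm) {v : n} {z : n → R}
    (hz : ∀ k, A v k ≠ 0 → z k = 0) :
    z ᵥ* (A.updateRow v 0).updateCol v 0 = z ᵥ* A.updateRow v 0 := by
  rw [vecMul_updateCol, dotProduct_zero, Function.update_eq_self_iff, vecMul_updateRow_zero_s16]
  refine (hA.vecMul_apply_eq_zero fun k hk => ?_).symm
  by_cases hkv : k = v <;> simp [hkv, hz k hk]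

theorem span_range_updateRow_zero_le [Semiring R] [DecidableEq m]
    (M : Matrix m n R) (i : m) :
    span R (range (M.updateRow i 0)) ≤ span R (M '' {j | j ≠ i}) := by
  refine span_le.2 ?_
  rintro _ ⟨j, rfl⟩
  by_cases hj : j = i
  · simp [hj]
  · exact subset_span ⟨j, hj, (updateRow_ne hj).symm⟩

theorem span_range_updateRow_zero_eq [Semiring R] [DecidableEq m] {M : Matrix m n R} {i : m}
    (h : M i ∈ span R (range (M.updateRow i 0))) :
    span R (range (M.updateRow i 0)) = span R (range M) := by
  refine le_antisymm
    ((M.span_range_updateRow_zero_le i).trans (span_mono (image_subset_range _ _))) (span_le.2 ?_)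
  rintro _ ⟨j, rfl⟩
  by_cases hj : j = i
  · exact hj ▸ h
  · exact subset_span ⟨j, updateRow_ne hj⟩

theorem rank_updateRow_zero_of_mem_span [Field R] [Fintype n] [Finite m] [DecidableEq m]
    {M : Matrix m n R} {i : m} (h : M i ∈ span R (range (M.updateRow i 0))) :
    (M.updateRow i 0).rank = M.rank := by
  rw [rank_eq_finrank_span_row, rank_eq_finrank_span_row]
  exact congrArg (fun P : Submodule R (n → R) => Module.finrank R P)
    (span_range_updateRow_zero_eq h)

end Matrix

theorem stmt_16_general {F : Type*} [Field F] {n : ℕ} (A : Matrix (Fin n) (Fin n) F)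
    (hA : A.IsSymm) (v : Fin n)
    (h : ∀ i : Fin n, A v i ≠ 0 → ∃ y : Fin n → F, (∀ k, A v k ≠ 0 → y k = 0) ∧
          Matrix.vecMul y ((A.updateRow v 0).updateCol v 0) = Pi.single i 1) :
    A v ∈ Submodule.span F (A '' {j : Fin n | j ≠ v}) ∧
      A.rank = (A.updateRow v 0).rank := by
  let W : Submodule F (Fin n → F) := Submodule.pi {k | A v k ≠ 0} fun _ => ⊥
  obtain ⟨z, hzW, hzB⟩ : A v ∈ W.map ((A.updateRow v 0).updateCol v 0).vecMulLinear :=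
    mem_of_forall_single_mem fun i hi =>
      let ⟨y, hyW, hy⟩ := h i hi
      ⟨y, fun k hk => (mem_bot F).2 (hyW k hk), hy⟩
  have hz : ∀ k, A v k ≠ 0 → z k = 0 := fun k hk => (mem_bot F).1 (hzW k hk)
  have hrow : A v ∈ span F (range (A.updateRow v 0)) := by
    rw [← hzB, Matrix.vecMulLinear_apply, hA.vecMul_updateCol_updateRow_zero hz]
    exact Matrix.vecMul_mem_span_range_s16 z _
  exact ⟨A.span_range_updateRow_zero_le v hrow,
    (Matrix.rank_updateRow_zero_of_mem_span hrow).symm⟩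

/-- If `A` is symmetric with `A v v = 0` and every `i` in the support of row `v` admits a
representation `y` of the unit vector `e_n(i)` in `A⟨v;v⟩` with `y` vanishing on the
support of row `v`, then row `v` of `A` lies in the span of the other rows; in particular
`rank A = rank A⟨v;⟩`. -/
theorem stmt_16 {F : Type*} [Field F] {n : ℕ} (A : Matrix (Fin n) (Fin n) F)
    (hA : A.IsSymm) (v : Fin n) (hvv : A v v = 0)
    (h : ∀ i : Fin n, A v i ≠ 0 → ∃ y : Fin n → F, (∀ k, A v k ≠ 0 → y k = 0) ∧
          Matrix.vecMul y ((A.updateRow v 0).updateCol v 0) = Pi.single i 1) :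
    A v ∈ Submodule.span F (A '' {j : Fin n | j ≠ v}) ∧
      A.rank = (A.updateRow v 0).rank :=
  stmt_16_general A hA v h
end

section
/- Let f be a real polynomial of degree d ≥ 2 with nonnegative coefficients such that f(1) ≤ 1 and such that f''/f' is nonincreasing on (0,1) (equivalently, f' is log-concave on (0,1)). Define G(α) = α + f(1 − f(α)) − 1. Then the set {α ∈ [0,1] : G(α) = 0} has at most 3 elements; moreover G'' has at most one zero in (0,1) and G' has at most two zeros in [0,1]. -/
/-!
Write `u = 1 - f(α)` and `r = f''/f'`. Then `G'' = f''(u) f'(α)² - f'(u) f''(α)`, and since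
`f'(u), f'(α) > 0` on `(0,1)`, `G''(α)` vanishes exactly when `r(u) f'(α) - r(α)` does. As `α`
grows, `u` decreases, so `r(u) > 0` grows by log-concavity, `f'(α) > 0` grows strictly and `r(α)`
falls: this function is strictly increasing, so `G''` has at most one zero in `(0,1)`. Rolle's
theorem then bounds the zeros of `G'` by two and those of `G` by three.
-/

open Polynomial Set

theorem Set.exists_strictMono_fin_of_le_encard {α : Type*} [LinearOrder α] {s : Set α} {n : ℕ}
    (h : (n : ℕ∞) ≤ s.encard) : ∃ c : Fin n → α, StrictMono c ∧ ∀ i, c i ∈ s := by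
  obtain ⟨t, hts, htn⟩ := exists_subset_encard_eq h
  have ht : t.Finite := finite_of_encard_eq_coe htn
  have hcard : ht.toFinset.card = n := by
    rw [ht.encard_eq_coe_toFinset_card] at htn
    exact_mod_cast htn
  exact ⟨ht.toFinset.orderEmbOfFin hcard, OrderEmbedding.strictMono _,
    fun i => hts (ht.mem_toFinset.mp (Finset.orderEmbOfFin_mem _ hcard i))⟩

theorem encard_zeros_Icc_le_succ_of_deriv {g : ℝ → ℝ} {a b : ℝ} (hg : ContinuousOn g (Icc a b))
    {n : ℕ} (h : {x ∈ Ioo a b | deriv g x = 0}.encard ≤ n) :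
    {x ∈ Icc a b | g x = 0}.encard ≤ n + 1 := by
  by_contra! hlt
  obtain ⟨c, hc, hcz⟩ := exists_strictMono_fin_of_le_encard (n := n + 2)
    (by exact_mod_cast Order.add_one_le_of_lt hlt)
  have hrolle (i : Fin (n + 1)) : ∃ d ∈ Ioo (c i.castSucc) (c i.succ), deriv g d = 0 :=
    exists_deriv_eq_zero (hc i.castSucc_lt_succ)
      (hg.mono (Icc_subset_Icc (hcz _).1.1 (hcz _).1.2)) ((hcz _).2.trans (hcz _).2.symm)
  choose d hd hd0 using hrolle
  have hd_mono : StrictMono d := fun i j hij =>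
    (hd i).2.trans ((hc.monotone (Fin.succ_le_castSucc_iff.mpr hij)).trans_lt (hd j).1)
  have hd_mem : range d ⊆ {x ∈ Ioo a b | deriv g x = 0} := range_subset_iff.mpr fun i =>
    ⟨⟨(hcz _).1.1.trans_lt (hd i).1, (hd i).2.trans_le (hcz _).1.2⟩, hd0 i⟩
  have : ((n + 1 : ℕ) : ℕ∞) ≤ n := calc
    ((n + 1 : ℕ) : ℕ∞) = ENat.card (Fin (n + 1)) := by simp
    _ ≤ (range d).encard := hd_mono.injective.encard_range
    _ ≤ n := (encard_mono hd_mem).trans h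
  norm_cast at this
  omega

theorem strictMonoOn_comp_mul_sub {s : Set ℝ} {r u q : ℝ → ℝ} (hr : AntitoneOn r s)
    (hu : AntitoneOn u s) (hus : MapsTo u s s) (hq : StrictMonoOn q s)
    (hr0 : ∀ x ∈ s, 0 < r x) (hq0 : ∀ x ∈ s, 0 ≤ q x) :
    StrictMonoOn (fun x => r (u x) * q x - r x) s := by
  intro x hx y hy hxy
  have hrx : r y ≤ r x := hr hx hy hxy.le
  have hrux : r (u x) * q x < r (u y) * q y := calc
    r (u x) * q x < r (u x) * q y := mul_lt_mul_of_pos_left (hq hx hy hxy) (hr0 _ (hus hx))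
    _ ≤ r (u y) * q y :=
      mul_le_mul_of_nonneg_right (hr (hus hy) (hus hx) (hu hx hy hxy.le)) (hq0 y hy)
  dsimp only
  linarith

namespace Polynomial

variable {p : ℝ[X]}

theorem eval_pos_of_coeff_nonneg (hp : ∀ k, 0 ≤ p.coeff k) (hp0 : p ≠ 0) {x : ℝ} (hx : 0 < x) :
    0 < p.eval x := by
  rw [eval_eq_sum_range]
  refine lt_of_lt_of_le ?_ (Finset.single_le_sum (f := fun i => p.coeff i * x ^ i)
    (fun i _ => mul_nonneg (hp i) (pow_pos hx i).le) (Finset.self_mem_range_succ _))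
  exact mul_pos ((hp _).lt_of_ne' (leadingCoeff_ne_zero.mpr hp0)) (pow_pos hx _)

theorem coeff_derivative_nonneg (hp : ∀ k, 0 ≤ p.coeff k) (k : ℕ) : 0 ≤ p.derivative.coeff k := by
  rw [coeff_derivative]
  exact mul_nonneg (hp _) (by positivity)

theorem strictMonoOn_eval_of_coeff_nonneg (hp : ∀ k, 0 ≤ p.coeff k) (hdeg : 0 < p.natDegree) :
    StrictMonoOn (fun x => p.eval x) (Ici 0) := by
  have hp' : p.derivative ≠ 0 := fun h => hdeg.ne' (derivative_eq_zero.mp h)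
  refine strictMonoOn_of_deriv_pos (convex_Ici 0) p.continuous.continuousOn fun x hx => ?_
  rw [interior_Ici] at hx
  rw [Polynomial.deriv]
  exact eval_pos_of_coeff_nonneg (coeff_derivative_nonneg hp) hp' hx

noncomputable def fixedPointPoly (f : ℝ[X]) : ℝ[X] := X + f.comp (1 - f) - 1

variable (f : ℝ[X]) (x : ℝ)

theorem eval_fixedPointPoly :
    (fixedPointPoly f).eval x = x + f.eval (1 - f.eval x) - 1 := by
  simp [fixedPointPoly, eval_comp]

theorem eval_derivative_derivative_fixedPointPoly :
    (derivative (derivative (fixedPointPoly f))).eval x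
      = f.derivative.derivative.eval (1 - f.eval x) * f.derivative.eval x ^ 2
        - f.derivative.eval (1 - f.eval x) * f.derivative.derivative.eval x := by
  simp [fixedPointPoly, derivative_comp, derivative_mul, eval_comp]
  ring

theorem eval_derivative_derivative_fixedPointPoly_eq_mul
    (hu : f.derivative.eval (1 - f.eval x) ≠ 0) (hx : f.derivative.eval x ≠ 0) :
    (derivative (derivative (fixedPointPoly f))).eval x
      = f.derivative.eval (1 - f.eval x) * f.derivative.eval x *
        (f.derivative.derivative.eval (1 - f.eval x) / f.derivative.eval (1 - f.eval x)
          * f.derivative.eval x - f.derivative.derivative.eval x / f.derivative.eval x) := by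
  rw [eval_derivative_derivative_fixedPointPoly]
  field_simp

variable {f}

theorem encard_zeros_derivative_derivative_fixedPointPoly_le_one (hdeg : 2 ≤ f.natDegree)
    (hcoeff : ∀ k, 0 ≤ f.coeff k) (hf1 : f.eval 1 ≤ 1)
    (hlc : AntitoneOn
      (fun x => (derivative (derivative f)).eval x / (derivative f).eval x) (Ioo 0 1)) :
    {x ∈ Ioo (0 : ℝ) 1 | (derivative (derivative (fixedPointPoly f))).eval x = 0}.encard ≤ 1 := by
  set r : ℝ → ℝ := fun x => (derivative (derivative f)).eval x / (derivative f).eval x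
  have hcoeff' := coeff_derivative_nonneg hcoeff
  have hdeg' : 1 ≤ f.derivative.natDegree := by rw [natDegree_derivative]; omega
  have hf : StrictMonoOn (fun x => f.eval x) (Ici 0) :=
    strictMonoOn_eval_of_coeff_nonneg hcoeff (by omega)
  have hf' : StrictMonoOn (fun x => f.derivative.eval x) (Ici 0) :=
    strictMonoOn_eval_of_coeff_nonneg hcoeff' hdeg'
  have hf'_pos {x : ℝ} (hx : 0 < x) : 0 < f.derivative.eval x :=
    eval_pos_of_coeff_nonneg hcoeff' (ne_zero_of_natDegree_gt hdeg') hx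
  have hf''_pos {x : ℝ} (hx : 0 < x) : 0 < f.derivative.derivative.eval x :=
    eval_pos_of_coeff_nonneg (coeff_derivative_nonneg hcoeff')
      (fun h => by rw [derivative_eq_zero] at h; omega) hx
  have hmaps : MapsTo (fun x => 1 - f.eval x) (Ioo 0 1) (Ioo 0 1) := fun x hx => by
    have h0 : 0 < f.eval x := eval_pos_of_coeff_nonneg hcoeff (ne_zero_of_natDegree_gt hdeg) hx.1
    have h1 : f.eval x < f.eval 1 := hf (mem_Ici.mpr hx.1.le) (mem_Ici.mpr zero_le_one) hx.2
    constructor <;> dsimp only <;> linarith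
  have hH := strictMonoOn_comp_mul_sub hlc
    (fun x hx y hy hxy => sub_le_sub_left (hf.monotoneOn hx.1.le hy.1.le hxy) 1) hmaps
    (hf'.mono fun x hx => mem_Ici.mpr hx.1.le)
    (fun x hx => div_pos (hf''_pos hx.1) (hf'_pos hx.1)) (fun x hx => (hf'_pos hx.1).le)
  have hH_zero {x : ℝ} (hx : x ∈ Ioo 0 1)
      (hG : (derivative (derivative (fixedPointPoly f))).eval x = 0) :
      r (1 - f.eval x) * f.derivative.eval x - r x = 0 := by
    have hu := (hf'_pos (hmaps hx).1).ne'
    rw [eval_derivative_derivative_fixedPointPoly_eq_mul f x hu (hf'_pos hx.1).ne'] at hG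
    exact (mul_eq_zero.mp hG).resolve_left (mul_ne_zero hu (hf'_pos hx.1).ne')
  exact encard_le_one_iff.mpr fun a b ha hb =>
    hH.injOn ha.1 hb.1 ((hH_zero ha.1 ha.2).trans (hH_zero hb.1 hb.2).symm)

end Polynomial

/-- For a polynomial `f` of degree `d ≥ 2` with nonnegative coefficients, `f(1) ≤ 1`,
and `f''/f'` nonincreasing on `(0,1)` (log-concavity of `f'`), the function
`G(α) = α + f(1 − f(α)) − 1` has at most `3` zeros in `[0,1]`; moreover `G''` has at most
one zero in `(0,1)` and `G'` has at most two zeros in `[0,1]`. -/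
theorem stmt_19 (f : Polynomial ℝ) (hdeg : 2 ≤ f.natDegree)
    (hcoeff : ∀ k, 0 ≤ f.coeff k) (hf1 : f.eval 1 ≤ 1)
    (hlc : AntitoneOn
      (fun x => (derivative (derivative f)).eval x / (derivative f).eval x)
      (Set.Ioo (0 : ℝ) 1)) :
    {α ∈ Set.Icc (0 : ℝ) 1 | α + f.eval (1 - f.eval α) - 1 = 0}.encard ≤ 3 ∧
    {x ∈ Set.Ioo (0 : ℝ) 1 |
      deriv (deriv (fun α : ℝ => α + f.eval (1 - f.eval α) - 1)) x = 0}.encard ≤ 1 ∧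
    {x ∈ Set.Icc (0 : ℝ) 1 |
      deriv (fun α : ℝ => α + f.eval (1 - f.eval α) - 1) x = 0}.encard ≤ 2 := by
  have hG : (fun α : ℝ => α + f.eval (1 - f.eval α) - 1) = fun x => (fixedPointPoly f).eval x :=
    funext fun x => (eval_fixedPointPoly f x).symm
  have hderiv (p : ℝ[X]) : deriv (fun x => p.eval x) = fun x => p.derivative.eval x :=
    funext fun _ => p.deriv
  simp only [hG, hderiv]
  have h2 := encard_zeros_derivative_derivative_fixedPointPoly_le_one hdeg hcoeff hf1 hlc
  have h1 : {x ∈ Icc (0 : ℝ) 1 | (derivative (fixedPointPoly f)).eval x = 0}.encard ≤ 2 :=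
    (encard_zeros_Icc_le_succ_of_deriv (derivative _).continuous.continuousOn
      (by rwa [hderiv])).trans (by norm_num)
  have h0 := encard_zeros_Icc_le_succ_of_deriv (fixedPointPoly f).continuous.continuousOn (n := 2) (by
    rw [hderiv]
    refine (encard_mono ?_).trans h1
    exact fun x hx => ⟨Ioo_subset_Icc_self hx.1, hx.2⟩)
  simp only [eval_fixedPointPoly] at h0
  exact ⟨h0.trans (by norm_num), h2, h1⟩
end
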